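/- arXiv:1910.13549 — 2 statements merged into one kernel-verified Lean document; each statement's English description precedes it below -/
import Mathlib

section
/- Let n ≥ 3 and 2 ≤ p ≤ n. Consider the following 2n−p polynomials in ℝ[x_1, …, x_n]: e_1, …, e_{n−1} (the elementary symmetric polynomials in x_1, …, x_n), κ := x_1 x_2 ⋯ x_{p−1}, and e*_j · κ for j = 1, …, n−p, where e*_j is the j-th elementary symmetric polynomial in x_{p+1}, …, x_n. Then the Jacobian matrix of this family with respect to x_1, …, x_n, viewed as a matrix over the field of rational functions ℝ(x_1, …, x_n), has rank n. -/
open Finset MvPolynomial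

/-- The `m`-th elementary symmetric polynomial of the values `v i` for `i ∈ s`. -/
noncomputable def esymOn {σ R : Type*} [CommSemiring R] (s : Finset σ) (m : ℕ) (v : σ → R) : R :=
  ∑ t ∈ Finset.powersetCard m s, ∏ i ∈ t, v i

/-- The `2n - p` coefficients of the input-output equation of the `n`-compartment cycle
model with input in compartment `1`, output in compartment `p`, and no leaks:
`e₁, …, e_{n-1}` (elementary symmetric polynomials in all the variables `x₁, …, xₙ`),
`κ = x₁⋯x_{p-1}`, and `e*ⱼ · κ` for `j = 1, …, n - p`, where `e*ⱼ` is the `j`-th elementary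
symmetric polynomial in `x_{p+1}, …, xₙ`.  (0-based: variable `i : Fin n` is `x_{i+1}`.) -/
noncomputable def coeffs2 (n p : ℕ) (m : Fin (2 * n - p)) : MvPolynomial (Fin n) ℝ :=
  if m.1 < n - 1 then
    esymOn Finset.univ (m.1 + 1) (X : Fin n → MvPolynomial (Fin n) ℝ)
  else if m.1 = n - 1 then
    ∏ i ∈ Finset.univ.filter (fun i : Fin n => i.1 < p - 1), X i
  else
    esymOn (Finset.univ.filter (fun i : Fin n => p ≤ i.1)) (m.1 - (n - 1))
        (X : Fin n → MvPolynomial (Fin n) ℝ) *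
      ∏ i ∈ Finset.univ.filter (fun i : Fin n => i.1 < p - 1), X i

/-!
Evaluate the Jacobian at the point `x = (0, 1, …, n - 1)` and keep the rows of `e₁, …, e_{n-1}`
and `κ`. Every `∂κ/∂xᵢ` with `i ≠ 1` is divisible by `x₁`, which vanishes there, so the row of `κ`
becomes a nonzero multiple of the first unit vector, and expanding along it leaves the matrix `(e_k(y₁, …, ŷᵢ, …, y_{n-1}))_{k,i}` with the
distinct values `yᵢ = i`. This matrix is invertible: multiplying it (rows reversed) by the
Vandermonde matrix of `-y` evaluates `∏_{j ≠ i} (X + y_j)` at `-y_l`, giving a diagonal matrix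
with nonzero diagonal. So the `n × n` Jacobian minor is a nonzero polynomial, hence nonzero in the
fraction field, and the Jacobian has rank `n`.
-/

section esymOn

variable {σ R : Type*} [CommSemiring R]

theorem map_esymOn {S : Type*} [CommSemiring S] (f : R →+* S) (s : Finset σ) (m : ℕ)
    (v : σ → R) : f (esymOn s m v) = esymOn s m (f ∘ v) := by
  simp only [esymOn, map_sum, map_prod, Function.comp_apply]

theorem esymOn_map {τ : Type*} (f : σ ↪ τ) (s : Finset σ) (m : ℕ) (v : τ → R) :
    esymOn (s.map f) m v = esymOn s m (v ∘ f) := by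
  rw [esymOn, esymOn, powersetCard_map, sum_map]
  exact sum_congr rfl fun t _ => prod_map t f v

theorem esymOn_zero (s : Finset σ) (v : σ → R) : esymOn s 0 v = 1 := by
  simp [esymOn]

variable [DecidableEq σ]

theorem esymOn_succ_of_mem {s : Finset σ} {i : σ} (hi : i ∈ s) (m : ℕ) (v : σ → R) :
    esymOn s (m + 1) v = esymOn (s.erase i) (m + 1) v + v i * esymOn (s.erase i) m v := by
  have hi' : i ∉ s.erase i := notMem_erase i s
  have hnotMem : ∀ t ∈ (s.erase i).powersetCard m, i ∉ t :=
    fun t ht h => hi' ((mem_powersetCard.1 ht).1 h)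
  have hsplit : s.powersetCard (m + 1) =
      (s.erase i).powersetCard (m + 1) ∪ ((s.erase i).powersetCard m).image (insert i) := by
    simpa only [insert_erase hi] using powersetCard_succ_insert hi' m
  rw [esymOn, hsplit, sum_union, sum_image, esymOn, esymOn, mul_sum]
  · exact congrArg _ (sum_congr rfl fun t ht => prod_insert (hnotMem t ht))
  · intro t ht u hu htu
    rw [← erase_insert (hnotMem t ht), ← erase_insert (hnotMem u hu), htu]
  · refine disjoint_left.2 fun t ht ht' => ?_
    obtain ⟨u, -, rfl⟩ := mem_image.1 ht'
    exact hi' ((mem_powersetCard.1 ht).1 (mem_insert_self i u))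

theorem esymOn_erase_of_eq_zero {s : Finset σ} {i : σ} (hi : i ∈ s) {v : σ → R} (hv : v i = 0)
    (m : ℕ) : esymOn s m v = esymOn (s.erase i) m v := by
  cases m with
  | zero => simp only [esymOn_zero]
  | succ m => rw [esymOn_succ_of_mem hi, hv, zero_mul, add_zero]

end esymOn

theorem esymOn_erase_succ_of_apply_zero {R : Type*} [CommSemiring R] {N : ℕ}
    {v : Fin (N + 1) → R} (hv : v 0 = 0) (j : Fin N) (k : ℕ) :
    esymOn (univ.erase j.succ) k v = esymOn (univ.erase j) k (v ∘ Fin.succ) := by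
  have hsupport : (univ.erase j.succ).erase 0 = (univ.erase j).map (Fin.succEmb N) := by
    ext x
    cases x using Fin.cases <;> simp
  rw [esymOn_erase_of_eq_zero (mem_erase.2 ⟨(Fin.succ_ne_zero j).symm, mem_univ 0⟩) hv,
    hsupport, esymOn_map]
  rfl

section pderiv

variable {σ R : Type*} [CommSemiring R]

theorem pderiv_prod_X_of_notMem {i : σ} {t : Finset σ} (hi : i ∉ t) :
    pderiv i (∏ j ∈ t, (X j : MvPolynomial σ R)) = 0 :=
  prod_induction _ (fun q => pderiv i q = 0) (fun a b ha hb => by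
    rw [Derivation.leibniz, ha, hb, smul_zero, smul_zero, add_zero])
    pderiv_one fun _ hj => pderiv_X_of_ne (ne_of_mem_of_not_mem hj hi)

theorem pderiv_esymOn_of_notMem {i : σ} {s : Finset σ} (hi : i ∉ s) (m : ℕ) :
    pderiv i (esymOn s m (X : σ → MvPolynomial σ R)) = 0 := by
  rw [esymOn, map_sum]
  exact sum_eq_zero fun t ht => pderiv_prod_X_of_notMem fun h => hi ((mem_powersetCard.1 ht).1 h)

variable [DecidableEq σ]

theorem pderiv_prod_X_of_mem {i : σ} {t : Finset σ} (hi : i ∈ t) :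
    pderiv i (∏ j ∈ t, (X j : MvPolynomial σ R)) = ∏ j ∈ t.erase i, X j := by
  rw [← mul_prod_erase t _ hi, pderiv_mul, pderiv_prod_X_of_notMem (notMem_erase i t),
    pderiv_X_self, mul_zero, one_mul, add_zero]

theorem pderiv_esymOn_succ_of_mem {i : σ} {s : Finset σ} (hi : i ∈ s) (m : ℕ) :
    pderiv i (esymOn s (m + 1) (X : σ → MvPolynomial σ R)) = esymOn (s.erase i) m X := by
  rw [esymOn_succ_of_mem hi, map_add, pderiv_mul, pderiv_esymOn_of_notMem (notMem_erase i s),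
    pderiv_esymOn_of_notMem (notMem_erase i s), pderiv_X_self, zero_add, mul_zero, one_mul,
    add_zero]

end pderiv

theorem det_esymOn_erase_ne_zero {R : Type*} [CommRing R] [IsDomain R] {N : ℕ} {y : Fin N → R}
    (hy : Function.Injective y) :
    (Matrix.of fun k i : Fin N => esymOn (univ.erase i) k y).det ≠ 0 := by
  set E : Matrix (Fin N) (Fin N) R := Matrix.of fun k i => esymOn (univ.erase i) k y
  set q : Fin N → Polynomial R := fun i => ∏ j ∈ univ.erase i, (Polynomial.X + Polynomial.C (y j))
  have hcard : ∀ i : Fin N, #(univ.erase i) = N - 1 := fun i => by simp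
  have hcoeff : ∀ m i : Fin N, (q i).coeff m = esymOn (univ.erase i) (Fin.rev m) y := fun m i => by
    rw [Finset.prod_X_add_C_coeff _ _ (by rw [hcard]; omega), hcard, Fin.val_rev, esymOn]
    congr 2
    omega
  have hdeg : ∀ i : Fin N, (q i).natDegree < N := fun i => by
    calc (q i).natDegree ≤ ∑ j ∈ univ.erase i, (Polynomial.X + Polynomial.C (y j)).natDegree :=
          Polynomial.natDegree_prod_le _ _
      _ = N - 1 := by simp [hcard]
      _ < N := by have := i.pos; omega
  have hmul : Matrix.vandermonde (-y) * E.submatrix Fin.revPerm id =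
      Matrix.diagonal fun i => (q i).eval (-y i) := by
    ext l i
    have heval :
        (Matrix.vandermonde (-y) * E.submatrix Fin.revPerm id) l i = (q i).eval (-y l) := by
      rw [Matrix.mul_apply, Polynomial.eval_eq_sum_range' (hdeg i), ← Fin.sum_univ_eq_sum_range]
      refine sum_congr rfl fun m _ => ?_
      rw [hcoeff, mul_comm]
      rfl
    rw [heval, Matrix.diagonal_apply]
    split_ifs with hli
    · rw [hli]
    · rw [Polynomial.eval_prod]
      exact prod_eq_zero (mem_erase.2 ⟨hli, mem_univ l⟩) (by simp)
  have hdiag : ∀ i, (q i).eval (-y i) ≠ 0 := fun i => by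
    rw [Polynomial.eval_prod]
    exact prod_ne_zero_iff.2 fun j hj => by
      simpa [neg_add_eq_sub, sub_eq_zero] using fun h => (mem_erase.1 hj).1 (hy h)
  intro hdet
  have := congrArg Matrix.det hmul
  rw [Matrix.det_mul, Matrix.det_permute, hdet, mul_zero, mul_zero, Matrix.det_diagonal] at this
  exact prod_ne_zero_iff.2 (fun i _ => hdiag i) this.symm

theorem Matrix.det_succ_last_row_of_eq_zero {R : Type*} [CommRing R] {N : ℕ}
    (M : Matrix (Fin (N + 1)) (Fin (N + 1)) R) (h : ∀ j ≠ 0, M (Fin.last N) j = 0) :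
    M.det = (-1) ^ N * M (Fin.last N) 0 * (M.submatrix Fin.castSucc Fin.succ).det := by
  rw [M.det_succ_row (Fin.last N), sum_eq_single 0 (fun j _ hj => by rw [h j hj]; ring)
    (fun h0 => absurd (mem_univ 0) h0)]
  simp

theorem Matrix.rank_eq_card_of_det_submatrix_ne_zero {K m n : Type*} [Field K] [Fintype m]
    [Fintype n] [DecidableEq n] (A : Matrix m n K) (r : n → m) (h : (A.submatrix r id).det ≠ 0) :
    A.rank = Fintype.card n := by
  refine le_antisymm A.rank_le_card_width ?_
  rw [← (A.submatrix r id).rank_of_isUnit ((isUnit_iff_isUnit_det _).2 h.isUnit)]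
  exact A.rank_submatrix_le r id

theorem coeffs2_of_lt {n p : ℕ} {m : Fin (2 * n - p)} (hm : m.1 < n - 1) :
    coeffs2 n p m = esymOn univ (m.1 + 1) X :=
  if_pos hm

theorem coeffs2_of_eq {n p : ℕ} {m : Fin (2 * n - p)} (hm : m.1 = n - 1) :
    coeffs2 n p m = ∏ i ∈ univ.filter (fun i : Fin n => i.1 < p - 1), X i := by
  rw [coeffs2, if_neg (by omega), if_pos hm]

theorem det_eval_jacobian_coeffs2_ne_zero {n p : ℕ} (hp : 2 ≤ p) (hpn : p ≤ n) :
    (Matrix.of fun k i : Fin n => eval (fun j : Fin n => (j : ℝ))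
      (pderiv i (coeffs2 n p (Fin.castLE (by omega) k)))).det ≠ 0 := by
  obtain ⟨N, rfl⟩ : ∃ N, n = N + 1 := ⟨n - 1, by omega⟩
  set a : Fin (N + 1) → ℝ := fun j => j
  set F := univ.filter fun i : Fin (N + 1) => i.1 < p - 1
  have h0F : 0 ∈ F := by simp [F]; omega
  have ha0 : a 0 = 0 := by simp [a]
  have heval : eval a ∘ (X : Fin (N + 1) → MvPolynomial (Fin (N + 1)) ℝ) = a :=
    funext fun i => MvPolynomial.eval_X i
  have hrows : N + 1 ≤ 2 * (N + 1) - p := by omega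
  have hlast : coeffs2 (N + 1) p (Fin.castLE hrows (Fin.last N)) = ∏ i ∈ F, X i :=
    coeffs2_of_eq (by simp)
  rw [Matrix.det_succ_last_row_of_eq_zero]
  · refine mul_ne_zero (mul_ne_zero (pow_ne_zero _ (by norm_num)) ?_) ?_
    · rw [Matrix.of_apply, hlast, pderiv_prod_X_of_mem h0F, map_prod]
      refine prod_ne_zero_iff.2 fun j hj => ?_
      rw [eval_X]
      exact Nat.cast_ne_zero.2 (Fin.val_ne_zero_iff.2 (mem_erase.1 hj).1)
    · convert det_esymOn_erase_ne_zero (y := a ∘ Fin.succ) ?_ using 2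
      · ext k j
        rw [Matrix.submatrix_apply, Matrix.of_apply, Matrix.of_apply, coeffs2_of_lt (by simp),
          pderiv_esymOn_succ_of_mem (mem_univ _), map_esymOn, heval]
        exact esymOn_erase_succ_of_apply_zero ha0 j k
      · intro j k hjk
        exact Fin.ext (by simpa [a] using hjk)
  · intro j hj
    rw [Matrix.of_apply, hlast]
    by_cases hjF : j ∈ F
    · rw [pderiv_prod_X_of_mem hjF, map_prod]
      exact prod_eq_zero (mem_erase.2 ⟨Ne.symm hj, h0F⟩) (by rw [eval_X, ha0])
    · rw [pderiv_prod_X_of_notMem hjF, map_zero]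

theorem stmt2_general (n p : ℕ) (hp : 2 ≤ p) (hpn : p ≤ n) :
    (Matrix.of fun (m : Fin (2 * n - p)) (i : Fin n) =>
        algebraMap (MvPolynomial (Fin n) ℝ) (FractionRing (MvPolynomial (Fin n) ℝ))
          (pderiv i (coeffs2 n p m))).rank = n := by
  have hrows : n ≤ 2 * n - p := by omega
  set Q : Matrix (Fin n) (Fin n) (MvPolynomial (Fin n) ℝ) :=
    Matrix.of fun k i => pderiv i (coeffs2 n p (Fin.castLE hrows k))
  have hQ : Q.det ≠ 0 := fun h => det_eval_jacobian_coeffs2_ne_zero hp hpn <| by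
    rw [← map_zero (eval _), ← h, RingHom.map_det]
    rfl
  refine (Matrix.rank_eq_card_of_det_submatrix_ne_zero _ (Fin.castLE hrows) ?_).trans
    (Fintype.card_fin n)
  change (RingHom.mapMatrix (algebraMap _ _) Q).det ≠ 0
  rw [← RingHom.map_det]
  exact (map_ne_zero_iff _ (IsFractionRing.injective _ _)).2 hQ

/-- The Jacobian matrix of the coefficient map of the cycle model (input in compartment 1,
output in compartment `p ≥ 2`, no leaks), viewed over the field of rational functions
`ℝ(x₁, …, xₙ)`, has full rank `n`. -/
theorem stmt2 (n p : ℕ) (hn : 3 ≤ n) (hp : 2 ≤ p) (hpn : p ≤ n) :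
    (Matrix.of fun (m : Fin (2 * n - p)) (i : Fin n) =>
        algebraMap (MvPolynomial (Fin n) ℝ) (FractionRing (MvPolynomial (Fin n) ℝ))
          (pderiv i (coeffs2 n p m))).rank = n :=
  stmt2_general n p hp hpn
end

section
/- Let n ≥ 3, 1 ≤ p ≤ n, and q ∈ {1, …, n}. Work in ℝ[x_1, …, x_n, y], and set z_q = x_q + y and z_ℓ = x_ℓ for ℓ ≠ q. Consider the 2n−p+1 polynomials: e_m(z_1, …, z_n) for m = 1, …, n−1; e_n(z_1, …, z_n) − x_1 x_2 ⋯ x_n; κ := x_1 x_2 ⋯ x_{p−1} (the empty product 1 if p = 1); and e_j(z_{p+1}, …, z_n) · κ for j = 1, …, n−p, where e_m denotes the m-th elementary symmetric polynomial in the listed arguments. Then the Jacobian matrix of this family with respect to the n+1 variables x_1, …, x_n, y, viewed over the field of rational functions ℝ(x_1, …, x_n, y), has rank n+1. -/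
open Finset MvPolynomial

/-- In `ℝ[x₁, …, xₙ, y]` (variables `Fin n ⊕ Unit`, with `Sum.inr ()` the leak variable `y`):
`z_q = x_q + y` and `z_ℓ = x_ℓ` for `ℓ ≠ q`. -/
noncomputable def z6 (n : ℕ) (q ℓ : Fin n) : MvPolynomial (Fin n ⊕ Unit) ℝ :=
  X (Sum.inl ℓ) + if ℓ = q then X (Sum.inr ()) else 0

/-- The `2n - p + 1` coefficients of the input-output equation of the cycle model with input
in compartment `1`, output in compartment `p`, and a single leak in compartment `q`:
`e₁(z), …, e_{n-1}(z)`, `eₙ(z) - x₁⋯xₙ`, `κ = x₁⋯x_{p-1}` (the empty product `1` if `p = 1`),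
and `eⱼ(z_{p+1}, …, zₙ)·κ` for `j = 1, …, n - p`. -/
noncomputable def coeffs6 (n p : ℕ) (q : Fin n) (m : Fin (2 * n - p + 1)) :
    MvPolynomial (Fin n ⊕ Unit) ℝ :=
  if m.1 < n - 1 then esymOn Finset.univ (m.1 + 1) (z6 n q)
  else if m.1 = n - 1 then
    esymOn Finset.univ n (z6 n q) - ∏ i : Fin n, X (Sum.inl i)
  else if m.1 = n then
    ∏ i ∈ Finset.univ.filter (fun i : Fin n => i.1 < p - 1), X (Sum.inl i)
  else
    esymOn (Finset.univ.filter (fun i : Fin n => p ≤ i.1)) (m.1 - n) (z6 n q) *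
      ∏ i ∈ Finset.univ.filter (fun i : Fin n => i.1 < p - 1), X (Sum.inl i)


/-! The Jacobian has full rank iff the only `ℝ`-derivation `D` of `ℝ[x, y]` into `ℝ(x, y)` that
kills every coefficient is `D = 0`. Put `wᵢ = D zᵢ` and `g = D(x₁⋯xₙ)`. The first `n` coefficients
say `D eₘ(z) = 0` for `m < n` and `D eₙ(z) = g`; since `∑ᵢ wᵢ ∏_{j ≠ i} (t - zⱼ)` has the
`D eₘ(z)` as coefficients up to sign, it is the constant `± g`, and evaluating at `t = zᵢ` gives
`wᵢ ∏_{j ≠ i} (zᵢ - zⱼ) = ± g`. If `p < n`, the last `n - p` coefficients (with `D κ = 0`) make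
the same polynomial over `{p+1, …, n}` vanish, so `w_{p+1} = 0` and hence `g = 0`. If `p = n`,
then `g = κ wₙ`, and `∏_{j ≠ n} (zₙ - zⱼ) ∓ κ ≠ 0` (it does not vanish at `xⱼ = j - 1`, `y = 0`)
forces `wₙ = 0`. Once `g = 0`, all `wᵢ` vanish, and `x₁⋯xₙ` then forces `D x_q = D y = 0`. -/

theorem Matrix.rank_eq_card_of_injective_mulVecLin {m n R : Type*} [Fintype n] [CommRing R]
    [StrongRankCondition R] (A : Matrix m n R) (h : Function.Injective A.mulVecLin) :
    A.rank = Fintype.card n := by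
  rw [Matrix.rank, LinearMap.finrank_range_of_inj h, Module.finrank_fintype_fun_eq_card]

theorem Derivation.finset_sum_apply {ι R A M : Type*} [CommSemiring R] [CommSemiring A]
    [AddCommMonoid M] [Algebra R A] [Module A M] [Module R M] (s : Finset ι)
    (D : ι → Derivation R A M) (a : A) : (∑ i ∈ s, D i) a = ∑ i ∈ s, D i a := by
  rw [← coeFnAddMonoidHom_apply, map_sum, Finset.sum_apply]
  rfl

theorem MvPolynomial.mkDerivation_eq_sum_pderiv {σ R M : Type*} [Fintype σ] [CommSemiring R]
    [AddCommMonoid M] [Module R M] [Module (MvPolynomial σ R) M]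
    [IsScalarTower R (MvPolynomial σ R) M] (f : σ → M) (p : MvPolynomial σ R) :
    mkDerivation R f p = ∑ i, pderiv i p • f i := by
  classical
  have : mkDerivation R f =
      ∑ i, (LinearMap.toSpanSingleton (MvPolynomial σ R) M (f i)).compDer (pderiv i) :=
    derivation_ext fun j => by simp [Derivation.finset_sum_apply, pderiv_X, Pi.single_apply]
  rw [this, Derivation.finset_sum_apply]
  rfl

section ElementarySymmetric

variable {ι R : Type*}

theorem esymOn_card [CommSemiring R] (s : Finset ι) (f : ι → R) :
    esymOn s #s f = ∏ i ∈ s, f i := by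
  rw [esymOn, powersetCard_self, sum_singleton]

theorem prod_sub_eq_sum_esymOn [CommRing R] (s : Finset ι) (u : ι → R) (a : R) :
    ∏ j ∈ s, (a - u j) = ∑ m ∈ range (#s + 1), (-1) ^ m * esymOn s m u * a ^ (#s - m) := by
  have := congrArg (Polynomial.eval a) (Multiset.prod_X_sub_X_eq_sum_esymm (s.val.map u))
  simp only [Multiset.map_map, Function.comp_def, Polynomial.eval_multiset_prod,
    Polynomial.eval_sub, Polynomial.eval_X, Polynomial.eval_C, Multiset.card_map,
    Polynomial.eval_finsetSum, Polynomial.eval_mul, Polynomial.eval_pow, Polynomial.eval_neg,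
    Polynomial.eval_one, Finset.esymm_map_val] at this
  simpa only [prod_eq_multiset_prod, esymOn, mul_assoc, card_val] using this

theorem Finset.sum_powersetCard_succ_sum_erase {M : Type*} [DecidableEq ι] [AddCommMonoid M]
    (s : Finset ι) (m : ℕ) (F : ι → Finset ι → M) :
    ∑ t ∈ powersetCard (m + 1) s, ∑ i ∈ t, F i (t.erase i) =
      ∑ i ∈ s, ∑ t ∈ powersetCard m (s.erase i), F i t := by
  rw [sum_sigma', sum_sigma']
  refine sum_nbij' (fun x => ⟨x.2, x.1.erase x.2⟩) (fun x => ⟨insert x.1 x.2, x.1⟩)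
    ?_ ?_ ?_ ?_ (fun _ _ => rfl)
  · rintro ⟨t, i⟩ hx
    simp only [mem_sigma, mem_powersetCard] at hx ⊢
    exact ⟨hx.1.1 hx.2, erase_subset_erase _ hx.1.1, by rw [card_erase_of_mem hx.2, hx.1.2]; rfl⟩
  · rintro ⟨i, t⟩ hx
    simp only [mem_sigma, mem_powersetCard, subset_erase] at hx ⊢
    exact ⟨⟨insert_subset hx.1 hx.2.1.1, by rw [card_insert_of_notMem hx.2.1.2, hx.2.2]⟩,
      mem_insert_self _ _⟩
  · rintro ⟨t, i⟩ hx
    simp only [mem_sigma] at hx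
    simp [insert_erase hx.2]
  · rintro ⟨i, t⟩ hx
    simp only [mem_sigma, mem_powersetCard, subset_erase] at hx
    simp [erase_insert hx.2.1.2]

variable [DecidableEq ι] [CommRing R] {M : Type*} [AddCommGroup M] [Module R M]
  {B : Finset ι} {u : ι → R} {w : ι → M}

/-- Lagrange interpolation: `∑ₖ wₖ ∏_{j ≠ k} (t - uⱼ)` has the sums in `h` as coefficients, so
it is constant, and its value at `uᵢ` is `wᵢ ∏_{j ≠ i} (uᵢ - uⱼ)`. -/
theorem prod_erase_sub_smul_eq_of_sum_esymOn_erase_smul_eq_zero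
    (h : ∀ m < #B - 1, ∑ k ∈ B, esymOn (B.erase k) m u • w k = 0) {i : ι} (hi : i ∈ B) :
    (∏ j ∈ B.erase i, (u i - u j)) • w i =
      ((-1) ^ (#B - 1) : R) • ∑ k ∈ B, esymOn (B.erase k) (#B - 1) u • w k := by
  have hQ : ∀ a, ∑ k ∈ B, (∏ j ∈ B.erase k, (a - u j)) • w k =
      ((-1) ^ (#B - 1) : R) • ∑ k ∈ B, esymOn (B.erase k) (#B - 1) u • w k := by
    intro a
    calc ∑ k ∈ B, (∏ j ∈ B.erase k, (a - u j)) • w k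
        = ∑ m ∈ range (#B - 1 + 1), ((-1) ^ m * a ^ (#B - 1 - m)) •
            ∑ k ∈ B, esymOn (B.erase k) m u • w k := by
          simp_rw [smul_sum]
          rw [sum_comm]
          refine sum_congr rfl fun k hk => ?_
          rw [prod_sub_eq_sum_esymOn, card_erase_of_mem hk, sum_smul]
          refine sum_congr rfl fun m _ => ?_
          rw [smul_smul, mul_right_comm]
      _ = _ := by
          rw [sum_range_succ, sum_eq_zero fun m hm => by rw [h m (mem_range.1 hm), smul_zero],
            zero_add, Nat.sub_self, pow_zero, mul_one]
  rw [← hQ (u i), sum_eq_single_of_mem i hi]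
  intro k hk hki
  rw [prod_eq_zero (mem_erase.2 ⟨Ne.symm hki, hi⟩) (sub_self _), zero_smul]

theorem eq_zero_of_sum_esymOn_erase_smul_eq_zero [IsDomain R] [Module.IsTorsionFree R M]
    (hu : Set.InjOn u B) (h : ∀ m < #B, ∑ k ∈ B, esymOn (B.erase k) m u • w k = 0) {i : ι}
    (hi : i ∈ B) : w i = 0 := by
  have hB : #B - 1 < #B := Nat.sub_lt (card_pos.2 ⟨i, hi⟩) one_pos
  have := prod_erase_sub_smul_eq_of_sum_esymOn_erase_smul_eq_zero
    (fun m hm => h m (hm.trans hB)) hi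
  rw [h _ hB, smul_zero, smul_eq_zero_iff_right] at this
  · exact this
  refine prod_ne_zero_iff.2 fun j hj => sub_ne_zero.2 fun hij => ?_
  exact (mem_erase.1 hj).1 (hu (mem_erase.1 hj).2 hi hij.symm)

end ElementarySymmetric

section Derivation

variable {ι R A M : Type*} [CommSemiring R] [CommSemiring A] [AddCommMonoid M] [Algebra R A]
  [Module A M] [Module R M] (D : Derivation R A M)

theorem Derivation.map_finset_prod [DecidableEq ι] (s : Finset ι) (f : ι → A) :
    D (∏ i ∈ s, f i) = ∑ i ∈ s, (∏ j ∈ s.erase i, f j) • D (f i) := by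
  induction s using Finset.induction_on with
  | empty => simp
  | insert a s ha ih =>
    rw [prod_insert ha, D.leibniz, ih, sum_insert ha, erase_insert ha, smul_sum, add_comm]
    congr 1
    refine sum_congr rfl fun i hi => ?_
    rw [erase_insert_of_ne (ne_of_mem_of_not_mem hi ha).symm,
      prod_insert fun h => ha (mem_of_mem_erase h), mul_smul]

theorem Derivation.map_esymOn_succ [DecidableEq ι] (s : Finset ι) (m : ℕ) (f : ι → A) :
    D (esymOn s (m + 1) f) = ∑ i ∈ s, esymOn (s.erase i) m f • D (f i) := by
  simp only [esymOn, map_sum, D.map_finset_prod, sum_smul]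
  exact sum_powersetCard_succ_sum_erase s m fun i t => (∏ j ∈ t, f j) • D (f i)

end Derivation

theorem Fin.card_filter_le_val {n p : ℕ} : #{i : Fin n | p ≤ i.1} = n - p := by
  have := card_filter_add_card_filter_not (s := (univ : Finset (Fin n))) (p := (·.1 < p))
  simp only [not_lt, card_univ, Fintype.card_fin, Fin.card_filter_val_lt] at this
  omega

section CycleModel

variable {n p : ℕ} {q : Fin n}

noncomputable def kappa6 (n p : ℕ) : MvPolynomial (Fin n ⊕ Unit) ℝ :=
  ∏ i ∈ univ.filter (fun i : Fin n => i.1 < p - 1), X (Sum.inl i)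

-- `x₁ = 0` in the paper's numbering, so that `κ` vanishes here as soon as `p ≥ 2`.
def basePoint (n : ℕ) : Fin n ⊕ Unit → ℝ :=
  Sum.elim (fun j => j.1) 0

@[simp]
theorem eval_basePoint_z6 (j : Fin n) : eval (basePoint n) (z6 n q j) = j.1 := by
  by_cases h : j = q <;> simp [z6, h, basePoint]

theorem z6_of_ne {i : Fin n} (h : i ≠ q) : z6 n q i = X (Sum.inl i) := by
  simp [z6, h]

theorem z6_injective : Function.Injective (z6 n q) := fun i j h => by
  simpa [Fin.ext_iff] using congrArg (eval (basePoint n)) h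

theorem eval_basePoint_prod_erase_sub_z6_ne_zero (i : Fin n) :
    eval (basePoint n) (∏ j ∈ univ.erase i, (z6 n q i - z6 n q j)) ≠ 0 := by
  simp only [map_prod, map_sub, eval_basePoint_z6]
  exact prod_ne_zero_iff.2 fun j hj => sub_ne_zero.2 <| by
    simpa [Fin.ext_iff, eq_comm] using (mem_erase.1 hj).1

theorem prod_erase_sub_z6_ne_zero (i : Fin n) :
    ∏ j ∈ univ.erase i, (z6 n q i - z6 n q j) ≠ 0 := fun h =>
  eval_basePoint_prod_erase_sub_z6_ne_zero (q := q) i (by rw [h, map_zero])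

theorem kappa6_ne_zero : kappa6 n p ≠ 0 :=
  prod_ne_zero_iff.2 fun _ _ => X_ne_zero _

theorem eval_basePoint_kappa6 (hp : 2 ≤ p) (hpn : p ≤ n) :
    eval (basePoint n) (kappa6 n p) = 0 := by
  rw [kappa6, map_prod]
  exact prod_eq_zero (i := ⟨0, by omega⟩) (by simp only [mem_filter, mem_univ, true_and]; omega)
    (by simp [basePoint])

theorem kappa6_self (hn : 1 ≤ n) :
    kappa6 n n = ∏ i ∈ univ.erase (⟨n - 1, by omega⟩ : Fin n), X (Sum.inl i) := by
  rw [kappa6]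
  congr 1
  ext i
  simp only [mem_filter, mem_univ, true_and, mem_erase, ne_eq, Fin.ext_iff, and_true]
  omega

variable {M : Type*} [AddCommGroup M] [Module (MvPolynomial (Fin n ⊕ Unit) ℝ) M] [Module ℝ M]
  {D : Derivation ℝ (MvPolynomial (Fin n ⊕ Unit) ℝ) M}

theorem Derivation.map_z6 (i : Fin n) :
    D (z6 n q i) = D (X (Sum.inl i)) + if i = q then D (X (Sum.inr ())) else 0 := by
  by_cases h : i = q <;> simp [z6, h]

section Coefficients

variable (hD : ∀ m, D (coeffs6 n p q m) = 0)
include hD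

theorem Derivation.sum_esymOn_erase_smul_map_z6 (hpn : p ≤ n) {m : ℕ} (hm : m < n - 1) :
    ∑ i, esymOn (univ.erase i) m (z6 n q) • D (z6 n q i) = 0 := by
  have := hD ⟨m, by omega⟩
  rwa [coeffs6, if_pos hm, D.map_esymOn_succ] at this

theorem Derivation.map_esymOn_z6 (hn : 1 ≤ n) (hpn : p ≤ n) :
    D (esymOn univ n (z6 n q)) = D (∏ i, X (Sum.inl i)) := by
  have := hD ⟨n - 1, by omega⟩
  rwa [coeffs6, if_neg (show ¬ n - 1 < n - 1 by omega), if_pos rfl, map_sub, sub_eq_zero] at this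

theorem Derivation.map_kappa6 (hn : 1 ≤ n) (hpn : p ≤ n) : D (kappa6 n p) = 0 := by
  have := hD ⟨n, by omega⟩
  rwa [coeffs6, if_neg (show ¬ n < n - 1 by omega), if_neg (show n ≠ n - 1 by omega),
    if_pos rfl] at this

theorem Derivation.sum_filter_esymOn_erase_smul_map_z6
    [Module.IsTorsionFree (MvPolynomial (Fin n ⊕ Unit) ℝ) M] (hn : 1 ≤ n) (hpn : p ≤ n) {m : ℕ}
    (hm : m < n - p) :
    ∑ i ∈ univ.filter (fun i : Fin n => p ≤ i.1),
      esymOn ((univ.filter fun i : Fin n => p ≤ i.1).erase i) m (z6 n q) • D (z6 n q i) = 0 := by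
  have := hD ⟨n + (m + 1), by omega⟩
  rw [coeffs6, if_neg (show ¬ n + (m + 1) < n - 1 by omega),
    if_neg (show n + (m + 1) ≠ n - 1 by omega), if_neg (show n + (m + 1) ≠ n by omega),
    Nat.add_sub_cancel_left, ← kappa6, D.leibniz, D.map_kappa6 hD hn hpn, smul_zero, zero_add,
    D.map_esymOn_succ, smul_eq_zero_iff_right kappa6_ne_zero] at this
  exact this

theorem Derivation.prod_erase_sub_z6_smul_map_z6 (hn : 1 ≤ n) (hpn : p ≤ n) (i : Fin n) :
    (∏ j ∈ univ.erase i, (z6 n q i - z6 n q j)) • D (z6 n q i) =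
      ((-1) ^ (n - 1) : MvPolynomial (Fin n ⊕ Unit) ℝ) • D (∏ i, X (Sum.inl i)) := by
  have h := prod_erase_sub_smul_eq_of_sum_esymOn_erase_smul_eq_zero (B := univ) (u := z6 n q)
    (w := fun i => D (z6 n q i))
    (by simpa using fun m hm => D.sum_esymOn_erase_smul_map_z6 hD hpn hm) (mem_univ i)
  rwa [card_univ, Fintype.card_fin, ← D.map_esymOn_succ, Nat.sub_add_cancel hn,
    D.map_esymOn_z6 hD hn hpn] at h

theorem Derivation.map_prod_X_eq_kappa6_smul (hn : 1 ≤ n) (hpn : p = n) :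
    D (∏ i, X (Sum.inl i)) = kappa6 n p • D (z6 n q ⟨n - 1, by omega⟩) := by
  set l : Fin n := ⟨n - 1, by omega⟩
  have hκ := D.map_kappa6 hD hn hpn.le
  rw [hpn, kappa6_self hn] at hκ ⊢
  by_cases hq : l = q
  · -- here `κ = ∏_{j ≠ q} zⱼ`, so `g = D(∏ⱼ zⱼ) = D(z_q κ)`
    have hz : ∏ j ∈ univ.erase l, z6 n q j = ∏ j ∈ univ.erase l, X (Sum.inl j) :=
      prod_congr rfl fun j hj => z6_of_ne (hq ▸ (mem_erase.1 hj).1)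
    have he := esymOn_card (univ : Finset (Fin n)) (z6 n q)
    rw [card_univ, Fintype.card_fin] at he
    rw [← D.map_esymOn_z6 hD hn hpn.le, he, ← mul_prod_erase univ _ (mem_univ l), hz, D.leibniz,
      hκ, smul_zero, zero_add]
  · rw [← mul_prod_erase univ _ (mem_univ l), D.leibniz, hκ, smul_zero, zero_add, z6_of_ne hq]

variable [Module.IsTorsionFree (MvPolynomial (Fin n ⊕ Unit) ℝ) M]

theorem Derivation.map_prod_X_eq_zero_of_lt (hpn : p < n) : D (∏ i, X (Sum.inl i)) = 0 := by
  have hw : D (z6 n q ⟨p, hpn⟩) = 0 :=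
    eq_zero_of_sum_esymOn_erase_smul_eq_zero z6_injective.injOn
      (fun m hm => D.sum_filter_esymOn_erase_smul_map_z6 hD (by omega) hpn.le
        (Fin.card_filter_le_val ▸ hm)) (by simp)
  have := D.prod_erase_sub_z6_smul_map_z6 hD (by omega) hpn.le ⟨p, hpn⟩
  rwa [hw, smul_zero, eq_comm, smul_eq_zero_iff_right (pow_ne_zero _ (neg_ne_zero.2 one_ne_zero))]
    at this

theorem Derivation.map_prod_X_eq_zero_of_eq (hn : 2 ≤ n) (hpn : p = n) :
    D (∏ i, X (Sum.inl i)) = 0 := by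
  set l : Fin n := ⟨n - 1, by omega⟩
  set ε : MvPolynomial (Fin n ⊕ Unit) ℝ := (-1) ^ (n - 1)
  have hg := D.map_prod_X_eq_kappa6_smul hD (by omega) hpn
  have hl := D.prod_erase_sub_z6_smul_map_z6 hD (by omega) hpn.le l
  have hne : ∏ j ∈ univ.erase l, (z6 n q l - z6 n q j) - ε * kappa6 n p ≠ 0 := fun h => by
    have := congrArg (eval (basePoint n)) h
    rw [map_sub, map_mul, eval_basePoint_kappa6 (by omega) hpn.le, mul_zero, sub_zero,
      map_zero] at this
    exact eval_basePoint_prod_erase_sub_z6_ne_zero l this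
  have hw : D (z6 n q l) = 0 := by
    rw [← smul_eq_zero_iff_right hne, sub_smul, hl, hg, mul_smul, sub_self]
  rw [hg, hw, smul_zero]

theorem Derivation.eq_zero_of_map_coeffs6 (hn : 2 ≤ n) (hpn : p ≤ n) : D = 0 := by
  have hg : D (∏ i, X (Sum.inl i)) = 0 :=
    hpn.lt_or_eq.elim (D.map_prod_X_eq_zero_of_lt hD) (D.map_prod_X_eq_zero_of_eq hD hn)
  have hz : ∀ i, D (z6 n q i) = 0 := fun i => by
    have := D.prod_erase_sub_z6_smul_map_z6 hD (by omega) hpn i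
    rwa [hg, smul_zero, smul_eq_zero_iff_right (prod_erase_sub_z6_ne_zero i)] at this
  have hx : ∀ i ≠ q, D (X (Sum.inl i)) = 0 := fun i hi => z6_of_ne hi ▸ hz i
  have hxq : D (X (Sum.inl q)) = 0 := by
    rwa [D.map_finset_prod, sum_eq_single q (fun i _ hi => by rw [hx i hi, smul_zero]) (by simp),
      smul_eq_zero_iff_right (prod_ne_zero_iff.2 fun _ _ => X_ne_zero _)] at hg
  have hy : D (X (Sum.inr ())) = 0 := by simpa [D.map_z6, hxq] using hz q
  refine MvPolynomial.derivation_ext ?_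
  rintro (i | ⟨⟩)
  · by_cases hi : i = q
    · simpa [hi] using hxq
    · simpa using hx i hi
  · simpa using hy

end Coefficients

end CycleModel

theorem stmt6_general (n p : ℕ) (hn : 3 ≤ n) (hpn : p ≤ n) (q : Fin n) :
    (Matrix.of fun (m : Fin (2 * n - p + 1)) (v : Fin n ⊕ Unit) =>
        algebraMap (MvPolynomial (Fin n ⊕ Unit) ℝ)
          (FractionRing (MvPolynomial (Fin n ⊕ Unit) ℝ))
          (pderiv v (coeffs6 n p q m))).rank = n + 1 := by
  refine (Matrix.rank_eq_card_of_injective_mulVecLin _ ?_).trans (by simp)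
  rw [← LinearMap.ker_eq_bot, LinearMap.ker_eq_bot']
  intro c hc
  have hD : mkDerivation ℝ c = 0 := by
    refine Derivation.eq_zero_of_map_coeffs6 (q := q) (fun m => ?_) (by omega) hpn
    simpa [mkDerivation_eq_sum_pderiv, Matrix.mulVec, dotProduct, Algebra.smul_def]
      using congrFun hc m
  funext v
  simpa using congrArg (· (X v)) hD

/-- The Jacobian of the coefficient map of the cycle model with input in compartment 1,
output in compartment `p`, and one leak in compartment `q`, with respect to the `n + 1`
variables `x₁, …, xₙ, y`, viewed over the field `ℝ(x₁, …, xₙ, y)`, has full rank `n + 1`. -/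
theorem stmt6 (n p : ℕ) (hn : 3 ≤ n) (hp1 : 1 ≤ p) (hpn : p ≤ n) (q : Fin n) :
    (Matrix.of fun (m : Fin (2 * n - p + 1)) (v : Fin n ⊕ Unit) =>
        algebraMap (MvPolynomial (Fin n ⊕ Unit) ℝ)
          (FractionRing (MvPolynomial (Fin n ⊕ Unit) ℝ))
          (pderiv v (coeffs6 n p q m))).rank = n + 1 :=
  stmt6_general n p hn hpn q
end
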